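/- For probability measures P and Q on the same measurable space and any B ≥ 2, the truncated KL divergence is bounded by the squared Hellinger distance: KL_B(P‖Q) ≤ 10·e^{B/2}·H²(P,Q). -/

import Mathlib

open MeasureTheory

/-- Squared Hellinger distance: `H²(P,Q) = 1 - ∫ √(dP dQ)`, computed with respect to
the dominating measure `P + Q`. -/
noncomputable def hellingerSq {Ω : Type*} [MeasurableSpace Ω] (P Q : Measure Ω) : ℝ :=
  1 - ∫ z, Real.sqrt ((P.rnDeriv (P + Q) z).toReal * (Q.rnDeriv (P + Q) z).toReal) ∂(P + Q)

/-- Truncated KL divergence `KL_B(P‖Q) = ∫ min(B, log(dP/dQ)) dP`, interpreted via the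
Lebesgue decomposition `P = Pᵃ + Pˢ` with `Pᵃ ≪ Q`: the log-ratio is `+∞` on the singular
part, so the integrand there equals `B`. -/
noncomputable def klTrunc {Ω : Type*} [MeasurableSpace Ω] (B : ℝ) (P Q : Measure Ω) : ℝ :=
  (∫ z, min B (Real.log ((P.rnDeriv Q z).toReal)) ∂(Q.withDensity (P.rnDeriv Q)))
    + B * (P.singularPart Q Set.univ).toReal

/-! With `r = dP/dQ` and `s` the mass of the singular part of `P`, one has `∫ r dQ = 1 - s`,
`KL_B = ∫ r·min(B, log r) dQ + B·s` and `H² = 1 - ∫ √r dQ` (the Hellinger affinity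
`√(dP/d(P+Q) · dQ/d(P+Q))` only sees the part of `P` absolutely continuous with respect to `Q`).
The pointwise bound `r·min(B, log r) ≤ (r - 1) + 5e^{B/2}(√r - 1)²` integrates to
`∫ r·min(B, log r) dQ ≤ -s + 5e^{B/2}(2H² - s)`, and the singular contribution `B·s` is
absorbed because `B ≤ e^{B/2}`. -/

namespace Real

lemma self_le_exp_half (x : ℝ) : x ≤ exp (x / 2) := by
  rcases le_or_gt x 0 with hx | hx
  · exact hx.trans (exp_pos _).le
  have h2e : 2 ≤ exp 1 := by linarith [add_one_le_exp 1]
  calc x ≤ x / 2 * exp 1 := by nlinarith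
    _ ≤ exp (x / 2 - 1) * exp 1 := by gcongr; linarith [add_one_le_exp (x / 2 - 1)]
    _ = exp (x / 2) := by rw [← exp_add, sub_add_cancel]

lemma neg_one_le_mul_min_log {B r : ℝ} (hB : 0 ≤ B) (hr : 0 ≤ r) :
    -1 ≤ r * min B (log r) := by
  rw [mul_min_of_nonneg _ _ hr]
  exact le_min (by nlinarith) (by linarith [self_sub_one_le_mul_log hr])

lemma sq_mul_min_log_sq_le {B t : ℝ} (hB : 2 ≤ B) (ht : 0 ≤ t) :
    t ^ 2 * min B (log (t ^ 2)) ≤ t ^ 2 - 1 + 5 * exp (B / 2) * (t - 1) ^ 2 := by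
  set E := exp (B / 2)
  have hE : 2 ≤ E := by linarith [add_one_le_exp (B / 2)]
  rcases le_or_gt t E with htE | hEt
  · -- `log (t²) ≤ 2 (t - 1)`, and the cubic excess `(2t + 1)(t - 1)²` is paid for by `t ≤ E`
    have hmin : t ^ 2 * min B (log (t ^ 2)) ≤ t ^ 2 * (2 * (t - 1)) := by
      rcases ht.eq_or_lt with rfl | ht0
      · simp
      refine mul_le_mul_of_nonneg_left ((min_le_right _ _).trans ?_) (sq_nonneg t)
      rw [log_pow]
      push_cast
      linarith [log_le_sub_one_of_pos ht0]
    nlinarith [mul_nonneg (sq_nonneg (t - 1)) (by linarith : (0 : ℝ) ≤ 5 * E - (2 * t + 1))]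
  · -- `min B _ ≤ B ≤ E`, and `5E(t - 1)² - Et² = E(4t² - 10t + 5) ≥ 0` once `t ≥ E ≥ 2`
    have hmin : t ^ 2 * min B (log (t ^ 2)) ≤ t ^ 2 * E :=
      mul_le_mul_of_nonneg_left ((min_le_left _ _).trans (self_le_exp_half B)) (sq_nonneg t)
    have hquad : 0 ≤ 4 * t ^ 2 - 10 * t + 5 := by nlinarith
    nlinarith [mul_nonneg (by linarith : (0 : ℝ) ≤ E) hquad]

lemma mul_min_log_le {B r : ℝ} (hB : 2 ≤ B) (hr : 0 ≤ r) :
    r * min B (log r) ≤ r - 1 + 5 * exp (B / 2) * (r - 2 * √r + 1) := by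
  have h := sq_mul_min_log_sq_le hB (sqrt_nonneg r)
  rwa [sq_sqrt hr, sub_sq, sq_sqrt hr, mul_one, one_pow] at h

lemma sqrt_mul_eq_mul_sqrt_div (a : ℝ) {b : ℝ} (hb : 0 ≤ b) : √(a * b) = b * √(a / b) := by
  rcases hb.eq_or_lt with rfl | hb0
  · simp
  rw [← sqrt_sq hb, ← sqrt_mul (sq_nonneg b), sqrt_sq hb]
  congr 1
  field_simp

end Real

namespace MeasureTheory

variable {Ω : Type*} [MeasurableSpace Ω] {μ : Measure Ω} {f : Ω → ℝ}

lemma Integrable.sqrt [IsFiniteMeasure μ] (hf : Integrable f μ) (hf0 : ∀ x, 0 ≤ f x) :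
    Integrable (fun x ↦ √(f x)) μ := by
  refine (hf.add (integrable_const 1)).mono' (g := fun x ↦ f x + 1)
    hf.aemeasurable.sqrt.aestronglyMeasurable (.of_forall fun x ↦ ?_)
  rw [Real.norm_of_nonneg (Real.sqrt_nonneg _)]
  nlinarith [Real.sq_sqrt (hf0 x), Real.sqrt_nonneg (f x)]

lemma Integrable.mul_min_log [IsFiniteMeasure μ] (hf : Integrable f μ) (hf0 : ∀ x, 0 ≤ f x)
    {B : ℝ} (hB : 0 ≤ B) : Integrable (fun x ↦ f x * min B (Real.log (f x))) μ := by
  refine ((hf.const_mul B).add (integrable_const 1)).mono' (g := fun x ↦ B * f x + 1) ?_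
    (.of_forall fun x ↦ ?_)
  · exact (hf.aemeasurable.mul (aemeasurable_const.min hf.aemeasurable.log)).aestronglyMeasurable
  · rw [Real.norm_eq_abs, abs_le]
    have hmin : f x * min B (Real.log (f x)) ≤ f x * B :=
      mul_le_mul_of_nonneg_left (min_le_left _ _) (hf0 x)
    constructor <;> nlinarith [Real.neg_one_le_mul_min_log hB (hf0 x), hf0 x]

lemma integral_mul_min_log_le [IsProbabilityMeasure μ] (hf : Integrable f μ) (hf0 : ∀ x, 0 ≤ f x)
    {B : ℝ} (hB : 2 ≤ B) :
    ∫ x, f x * min B (Real.log (f x)) ∂μ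
      ≤ (∫ x, f x ∂μ) - 1 + 5 * Real.exp (B / 2) * ((∫ x, f x ∂μ) - 2 * ∫ x, √(f x) ∂μ + 1) := by
  have hsqrt := hf.sqrt hf0
  have h1 : Integrable (fun x ↦ f x - 1) μ := hf.sub (integrable_const 1)
  have h2 : Integrable (fun x ↦ f x - 2 * √(f x)) μ := hf.sub (hsqrt.const_mul 2)
  have h3 : Integrable (fun x ↦ 5 * Real.exp (B / 2) * (f x - 2 * √(f x) + 1)) μ :=
    (h2.add (integrable_const 1)).const_mul _
  calc ∫ x, f x * min B (Real.log (f x)) ∂μ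
      ≤ ∫ x, (f x - 1 + 5 * Real.exp (B / 2) * (f x - 2 * √(f x) + 1)) ∂μ :=
        integral_mono (hf.mul_min_log hf0 (by linarith)) (h1.add h3)
          fun x ↦ Real.mul_min_log_le hB (hf0 x)
    _ = _ := by
      rw [integral_add h1 h3, integral_const_mul, integral_add h2 (integrable_const 1),
        integral_sub hf (integrable_const 1), integral_sub hf (hsqrt.const_mul 2),
        integral_const_mul]
      simp

lemma integral_sqrt_rnDeriv_add (P Q : Measure Ω) [SigmaFinite P] [SigmaFinite Q] :
    ∫ z, √((P.rnDeriv (P + Q) z).toReal * (Q.rnDeriv (P + Q) z).toReal) ∂(P + Q)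
      = ∫ x, √((P.rnDeriv Q x).toReal) ∂Q := by
  have hQ : Q ≪ P + Q := Measure.AbsolutelyContinuous.rfl.add_right' P
  calc ∫ z, √((P.rnDeriv (P + Q) z).toReal * (Q.rnDeriv (P + Q) z).toReal) ∂(P + Q)
      = ∫ z, (Q.rnDeriv (P + Q) z).toReal
          • √((P.rnDeriv (P + Q) z / Q.rnDeriv (P + Q) z).toReal) ∂(P + Q) := by
        simp_rw [ENNReal.toReal_div, smul_eq_mul,
          Real.sqrt_mul_eq_mul_sqrt_div _ ENNReal.toReal_nonneg]
    _ = ∫ x, √((P.rnDeriv (P + Q) x / Q.rnDeriv (P + Q) x).toReal) ∂Q :=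
        integral_rnDeriv_smul hQ
    _ = ∫ x, √((P.rnDeriv Q x).toReal) ∂Q := by
        refine integral_congr_ae ?_
        filter_upwards [P.rnDeriv_eq_div (Measure.AbsolutelyContinuous.rfl.add_right Q) hQ]
          with x hx
        rw [hx]

lemma hellingerSq_eq_one_sub_integral_sqrt_rnDeriv (P Q : Measure Ω) [SigmaFinite P]
    [SigmaFinite Q] : hellingerSq P Q = 1 - ∫ x, √((P.rnDeriv Q x).toReal) ∂Q := by
  rw [hellingerSq, integral_sqrt_rnDeriv_add]

lemma klTrunc_eq_integral_rnDeriv (B : ℝ) (P Q : Measure Ω) [SigmaFinite P] :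
    klTrunc B P Q = ∫ x, (P.rnDeriv Q x).toReal * min B (Real.log (P.rnDeriv Q x).toReal) ∂Q
      + B * (P.singularPart Q Set.univ).toReal := by
  rw [klTrunc, integral_withDensity_eq_integral_toReal_smul (P.measurable_rnDeriv Q)
    (P.rnDeriv_lt_top Q)]
  rfl

end MeasureTheory

/-- For `B ≥ 2`, `KL_B(P‖Q) ≤ 10 e^{B/2} H²(P,Q)`. -/
theorem klTrunc_le_hellingerSq {Ω : Type*} [MeasurableSpace Ω]
    (P Q : Measure Ω) [IsProbabilityMeasure P] [IsProbabilityMeasure Q]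
    (B : ℝ) (hB : 2 ≤ B) :
    klTrunc B P Q ≤ 10 * Real.exp (B / 2) * hellingerSq P Q := by
  set s := (P.singularPart Q Set.univ).toReal
  have hmass : ∫ x, (P.rnDeriv Q x).toReal ∂Q = 1 - s := by
    rw [Measure.integral_toReal_rnDeriv', probReal_univ]
    rfl
  have hkl := integral_mul_min_log_le (Measure.integrable_toReal_rnDeriv (μ := P) (ν := Q))
    (fun _ ↦ ENNReal.toReal_nonneg) hB
  have hBE := Real.self_le_exp_half B
  have hs : 0 ≤ s := ENNReal.toReal_nonneg
  rw [hmass] at hkl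
  rw [klTrunc_eq_integral_rnDeriv, hellingerSq_eq_one_sub_integral_sqrt_rnDeriv]
  nlinarith [mul_nonneg hs (by linarith : 0 ≤ 1 + 5 * Real.exp (B / 2) - B)]
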